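/- Let Γ be a binary group of order 2n with unique involution λ. If A = (∞, α₁, …, α_{2n}) is a (2n+1)-cycle on {∞} ∪ Γ with A·λ = A and {α_i α_{i+1}^{-1}, α_{i+1} α_i^{-1} : i ∈ [n−1]} = Γ \ {1, λ}, then the set of distinct right translates {A·x : x ∈ X}, where X is a complete system of representatives of the cosets of {1, λ} in Γ, is a 1-rotational HCS(2n+1) over Γ. -/

import Mathlib

open Pointwise

variable {V : Type*}

/-- The action of a permutation on a simple graph by relabelling vertices. -/
instance permGraphAction : MulAction (Equiv.Perm V) (SimpleGraph V) where
  smul σ H := H.map σ.toEmbedding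
  one_smul H := by
    show H.map (1 : Equiv.Perm V).toEmbedding = H
    ext a b
    simp [SimpleGraph.map_adj]
  mul_smul σ τ H := by
    ext a b
    show (H.map (σ * τ).toEmbedding).Adj a b ↔ ((H.map τ.toEmbedding).map σ.toEmbedding).Adj a b
    rw [SimpleGraph.map_adj, SimpleGraph.map_adj]
    simp only [SimpleGraph.map_adj τ.toEmbedding]
    simp only [Equiv.coe_toEmbedding, Equiv.Perm.coe_mul,
      Function.comp_apply]
    constructor
    · rintro ⟨u, v, h, rfl, rfl⟩
      exact ⟨τ u, τ v, ⟨u, v, h, rfl, rfl⟩, rfl, rfl⟩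
    · rintro ⟨-, -, ⟨u, v, h, rfl, rfl⟩, rfl, rfl⟩
      exact ⟨u, v, h, rfl, rfl⟩

lemma perm_smul_graph (σ : Equiv.Perm V) (H : SimpleGraph V) :
    σ • H = H.map σ.toEmbedding := rfl

/-- A Hamiltonian cycle of the complete graph on `V`: a connected, 2-regular
(spanning) subgraph. -/
def IsHamCycle [Fintype V] (H : SimpleGraph V) : Prop :=
  H.Connected ∧ ∀ v : V, (H.neighborSet v).ncard = 2

/-- A Hamiltonian cycle system: a set of Hamiltonian cycles whose edge sets
partition the edge set of the complete graph. -/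
def IsHCS [Fintype V] (𝓗 : Set (SimpleGraph V)) : Prop :=
  (∀ H ∈ 𝓗, IsHamCycle H) ∧
    ∀ e ∈ (⊤ : SimpleGraph V).edgeSet, ∃! H, H ∈ 𝓗 ∧ e ∈ H.edgeSet

/-- The full automorphism group of a Hamiltonian cycle system, as the subgroup
of vertex permutations preserving the set of cycles. -/
def autHCS (𝓗 : Set (SimpleGraph V)) : Subgroup (Equiv.Perm V) :=
  MulAction.stabilizer (Equiv.Perm V) 𝓗

/-- The cycle graph traced by a map from `ZMod m` (consecutive residues are adjacent). -/
def cycleOn {W : Type*} (m : ℕ) (f : ZMod m → W) : SimpleGraph W :=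
  SimpleGraph.fromRel (fun a b => ∃ i : ZMod m, f i = a ∧ f (i + 1) = b)

/-!
Right translation by `g` sends a dart `(a, b)` of the starter `A = (∞, α₁, …, α₂ₙ)` to
`(a g, b g)` and keeps its difference `a b⁻¹`. Since `A·λ = A` fixes `∞`, it reverses the cycle:
`α₋ᵢ = αᵢ λ`. Hence the differences `αᵢ αᵢ₊₁⁻¹`, `i ∈ [2n-1]`, are those for `i ∈ [n-1]`, their
inverses, and the middle one `αₙ λ αₙ⁻¹ = λ` (the unique involution is central); so these
`2n - 1` differences exhaust `Γ \ {1}` and each occurs once. Consequently an edge `{a, b}` of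
`K₂ₙ₊₁` lies in `A·y` exactly for `y` in one coset `{x, λx}`, and `A·x = A·λx`; edges through `∞`
behave the same way because the neighbours of `∞` are `α₁` and `α₁λ`.
-/

open Function

/-- Right translation `A ↦ A·g` on `{∞} ∪ Γ`, with `∞ = none`. -/
local notation "ρ" g:max => Equiv.optionCongr (Equiv.mulRight g)

theorem perm_smul_adj (σ : Equiv.Perm V) (H : SimpleGraph V) (a b : V) :
    (σ • H).Adj a b ↔ H.Adj (σ⁻¹ a) (σ⁻¹ b) := by
  rw [perm_smul_graph, SimpleGraph.map_adj]
  constructor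
  · rintro ⟨u, v, h, rfl, rfl⟩
    simpa using h
  · exact fun h => ⟨σ⁻¹ a, σ⁻¹ b, h, by simp, by simp⟩

theorem IsHamCycle.smul [Fintype V] (σ : Equiv.Perm V) {H : SimpleGraph V} (h : IsHamCycle H) :
    IsHamCycle (σ • H) := by
  refine ⟨?_, fun v => ?_⟩
  · rw [perm_smul_graph]
    exact h.1.map (SimpleGraph.Iso.map (σ : V ≃ V) H).toHom fun w => ⟨σ.symm w, by simp⟩
  · have : (σ • H).neighborSet v = σ '' H.neighborSet (σ⁻¹ v) := by
      ext w
      rw [Equiv.image_eq_preimage_symm]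
      exact perm_smul_adj σ H v w
    rw [this, Set.ncard_image_of_injective _ σ.injective]
    exact h.2 _

theorem ZMod.natCast_ne_zero_of_pos_of_lt {m k : ℕ} (hk : 0 < k) (hkm : k < m) :
    (k : ZMod m) ≠ 0 := by
  rw [Ne, ZMod.natCast_eq_zero_iff]
  exact Nat.not_dvd_of_pos_of_lt hk hkm

section CycleOn

variable {W : Type*} {m : ℕ} {f : ZMod m → W}

theorem cycleOn_adj_apply_iff (hf : Bijective f) (hm : 1 < m) {i : ZMod m} {w : W} :
    (cycleOn m f).Adj (f i) w ↔ w = f (i + 1) ∨ w = f (i - 1) := by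
  have h1 : (1 : ZMod m) ≠ 0 := by exact_mod_cast ZMod.natCast_ne_zero_of_pos_of_lt one_pos hm
  obtain ⟨j, rfl⟩ := hf.2 w
  simp only [cycleOn, SimpleGraph.fromRel_adj, hf.1.eq_iff, exists_eq_left, ne_eq]
  constructor
  · rintro ⟨-, rfl | rfl⟩
    · exact Or.inl rfl
    · exact Or.inr (by ring)
  · rintro (rfl | rfl)
    · exact ⟨fun h => h1 (by linear_combination -h), Or.inl rfl⟩
    · exact ⟨fun h => h1 (by linear_combination h), Or.inr (by ring)⟩

theorem cycleOn_adj_add_one (hf : Bijective f) (hm : 1 < m) (i : ZMod m) :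
    (cycleOn m f).Adj (f i) (f (i + 1)) :=
  (cycleOn_adj_apply_iff hf hm).2 (Or.inl rfl)

theorem isHamCycle_cycleOn [Fintype W] (hf : Bijective f) (hm : 2 < m) :
    IsHamCycle (cycleOn m f) := by
  have : NeZero m := ⟨by omega⟩
  have h2 : (2 : ZMod m) ≠ 0 := by exact_mod_cast ZMod.natCast_ne_zero_of_pos_of_lt two_pos hm
  have hreach (k : ℕ) : (cycleOn m f).Reachable (f 0) (f k) := by
    induction k with
    | zero => simp
    | succ k ih => exact_mod_cast ih.trans (cycleOn_adj_add_one hf (by omega) _).reachable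
  have : Nonempty W := ⟨f 0⟩
  refine ⟨⟨fun u v => ?_⟩, fun v => ?_⟩
  · obtain ⟨i, rfl⟩ := hf.2 u
    obtain ⟨j, rfl⟩ := hf.2 v
    rw [← ZMod.natCast_zmod_val i, ← ZMod.natCast_zmod_val j]
    exact (hreach _).symm.trans (hreach _)
  · obtain ⟨i, rfl⟩ := hf.2 v
    have : (cycleOn m f).neighborSet (f i) = {f (i + 1), f (i - 1)} := by
      ext w
      exact cycleOn_adj_apply_iff hf (by omega)
    rw [this, Set.ncard_pair]
    exact fun h => h2 (by linear_combination hf.1 h)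

theorem cycleOn_apply_neg (hf : Bijective f) (hm : 2 < m) {φ : W → W} (hφ : Injective φ)
    (hadj : ∀ u v, (cycleOn m f).Adj u v → (cycleOn m f).Adj (φ u) (φ v))
    (h0 : φ (f 0) = f 0) (h1 : φ (f 1) ≠ f 1) (i : ZMod m) : φ (f i) = f (-i) := by
  have : NeZero m := ⟨by omega⟩
  have h2 : (2 : ZMod m) ≠ 0 := by exact_mod_cast ZMod.natCast_ne_zero_of_pos_of_lt two_pos hm
  have hnbr {j : ZMod m} {w : W} (h : (cycleOn m f).Adj (f j) w) :=
    (cycleOn_adj_apply_iff hf (by omega)).1 h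
  suffices ∀ k : ℕ, φ (f k) = f (-k) ∧ φ (f (k + 1)) = f (-(k + 1)) by
    simpa using (this i.val).1
  intro k
  induction k with
  | zero =>
    refine ⟨by simpa using h0, ?_⟩
    have := hadj _ _ (cycleOn_adj_add_one hf (by omega) 0)
    rw [h0] at this
    simpa [h1] using hnbr this
  | succ k ih =>
    refine ⟨by exact_mod_cast ih.2, ?_⟩
    have := hadj _ _ (cycleOn_adj_add_one hf (by omega) ((k : ZMod m) + 1))
    rw [ih.2] at this
    rcases hnbr this with h | h
    · rw [show -((k : ZMod m) + 1) + 1 = -k by ring, ← ih.1] at h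
      exact absurd (hf.1 (hφ h)) fun h => h2 (by linear_combination h)
    · push_cast
      rw [h]
      congr 1
      ring

end CycleOn

section Translation

variable {Γ : Type*} [Group Γ]

theorem optionCongr_mulRight_mul (a b : Γ) :
    ρ a * ρ b = ρ (b * a) := by
  ext (_ | x) <;> simp [mul_assoc]

theorem optionCongr_mulRight_inv (a : Γ) : (ρ a)⁻¹ = ρ a⁻¹ := by
  rw [inv_eq_iff_mul_eq_one, optionCongr_mulRight_mul, inv_mul_cancel]
  ext (_ | x) <;> simp

theorem optionCongr_mulRight_smul_adj (y : Γ) (C : SimpleGraph (Option Γ)) (p q : Option Γ) :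
    (ρ y • C).Adj p q ↔ C.Adj (p.map (· * y⁻¹)) (q.map (· * y⁻¹)) := by
  rw [perm_smul_adj, optionCongr_mulRight_inv]
  rfl

theorem optionCongr_mulRight_smul_range (g : Γ) (C : SimpleGraph (Option Γ)) :
    ρ g • Set.range (fun x : Γ => ρ x • C) = Set.range (fun x : Γ => ρ x • C) := by
  rw [← Set.image_smul, ← Set.range_comp]
  refine Eq.trans ?_ ((Equiv.mulRight g).surjective.range_comp _)
  congr 1
  ext x : 1
  simp only [comp_apply, Equiv.coe_mulRight, smul_smul, optionCongr_mulRight_mul]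

variable {C : SimpleGraph (Option Γ)} {l : Γ}

theorem optionCongr_mulRight_inv_mul_smul (hfix : ρ l • C = C) (x : Γ) :
    ρ (l⁻¹ * x) • C = ρ x • C := by
  rw [← optionCongr_mulRight_mul, mul_smul, ← optionCongr_mulRight_inv,
    inv_smul_eq_iff.mpr hfix.symm]

theorem translate_eq_of_mul_inv_eq (hfix : ρ l • C = C) {a u y : Γ}
    (h : a * y⁻¹ = u ∨ a * y⁻¹ = u * l) : ρ y • C = ρ (u⁻¹ * a) • C := by
  rcases h with h | h
  · rw [← h]
    group
  · have hy : y = l⁻¹ * (u⁻¹ * a) := by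
      rw [← mul_assoc, ← mul_inv_rev, ← h]
      group
    rw [hy, optionCongr_mulRight_inv_mul_smul hfix]

theorem exists_translate_adj_none (hfix : ρ l • C = C)
    (hinf : ∃ u : Γ, C.Adj none (some u) ∧
      ∀ w : Γ, C.Adj none (some w) → w = u ∨ w = u * l) (a : Γ) :
    ∃ x : Γ, (ρ x • C).Adj none (some a) ∧
      ∀ y : Γ, (ρ y • C).Adj none (some a) → ρ y • C = ρ x • C := by
  obtain ⟨u, hu, huniq⟩ := hinf
  refine ⟨u⁻¹ * a, ?_, fun y hy => translate_eq_of_mul_inv_eq hfix (huniq _ ?_)⟩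
  · rw [optionCongr_mulRight_smul_adj]
    simpa using hu
  · rw [optionCongr_mulRight_smul_adj] at hy
    simpa using hy

theorem exists_translate_adj_some (hfix : ρ l • C = C)
    (hdart : ∀ δ : Γ, δ ≠ 1 → ∃ u v : Γ, C.Adj (some u) (some v) ∧ u * v⁻¹ = δ ∧
      ∀ u' v' : Γ, C.Adj (some u') (some v') → u' * v'⁻¹ = δ → u' = u ∨ u' = u * l)
    {a b : Γ} (hab : a ≠ b) :
    ∃ x : Γ, (ρ x • C).Adj (some a) (some b) ∧
      ∀ y : Γ, (ρ y • C).Adj (some a) (some b) → ρ y • C = ρ x • C := by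
  obtain ⟨u, v, huv, hδ, huniq⟩ := hdart (a * b⁻¹) (mul_inv_eq_one.not.2 hab)
  refine ⟨u⁻¹ * a, ?_, fun y hy =>
    translate_eq_of_mul_inv_eq hfix (huniq _ (b * y⁻¹) ?_ ?_)⟩
  · have hv : b * (u⁻¹ * a)⁻¹ = v := by
      rw [← inv_inj, ← mul_right_inj u, hδ]
      group
    rw [optionCongr_mulRight_smul_adj, Option.map_some, Option.map_some, hv,
      show a * (u⁻¹ * a)⁻¹ = u by group]
    exact huv
  · rw [optionCongr_mulRight_smul_adj] at hy
    simpa using hy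
  · group

theorem isHCS_range_translates [Fintype Γ] (hC : IsHamCycle C) (hfix : ρ l • C = C)
    (hinf : ∃ u : Γ, C.Adj none (some u) ∧
      ∀ w : Γ, C.Adj none (some w) → w = u ∨ w = u * l)
    (hdart : ∀ δ : Γ, δ ≠ 1 → ∃ u v : Γ, C.Adj (some u) (some v) ∧ u * v⁻¹ = δ ∧
      ∀ u' v' : Γ, C.Adj (some u') (some v') → u' * v'⁻¹ = δ → u' = u ∨ u' = u * l) :
    IsHCS (Set.range fun x : Γ => ρ x • C) := by
  refine ⟨fun _ ⟨x, hx⟩ => hx ▸ hC.smul _, fun e he => ?_⟩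
  induction e using Sym2.ind with | _ p q => ?_
  have key : ∃ x : Γ, (ρ x • C).Adj p q ∧ ∀ y : Γ, (ρ y • C).Adj p q → ρ y • C = ρ x • C := by
    rcases p with _ | a <;> rcases q with _ | b
    · exact absurd rfl he
    · exact exists_translate_adj_none hfix hinf b
    · obtain ⟨x, hx, huniq⟩ := exists_translate_adj_none hfix hinf a
      exact ⟨x, hx.symm, fun y hy => huniq y hy.symm⟩
    · exact exists_translate_adj_some hfix hdart fun h => he (congrArg some h)
  obtain ⟨x, hx, huniq⟩ := key
  refine ⟨_, ⟨⟨x, rfl⟩, hx⟩, ?_⟩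
  rintro _ ⟨⟨y, rfl⟩, hy⟩
  exact huniq y hy

end Translation

theorem mul_mul_inv_eq_self_of_existsUnique_orderOf_eq_two {G : Type*} [Group G] {l : G}
    (hl : orderOf l = 2) (h : ∃! x : G, orderOf x = 2) (x : G) : x * l * x⁻¹ = l :=
  h.unique (by rw [← MulAut.conj_apply, MulEquiv.orderOf_eq, hl]) hl

section Starter

variable {Γ : Type*} [Group Γ] {m : ℕ} {f : ZMod m → Option Γ} {l : Γ}

theorem apply_neg_eq_map_mul_of_smul_cycleOn_eq (hf : Bijective f) (hm : 2 < m)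
    (hf0 : f 0 = none) (hl : l ≠ 1) (hfix : ρ l • cycleOn m f = cycleOn m f) (i : ZMod m) :
    f (-i) = (f i).map (· * l) := by
  have h1 : f 1 ≠ none :=
    hf0 ▸ hf.1.ne (by exact_mod_cast ZMod.natCast_ne_zero_of_pos_of_lt one_pos (by omega))
  obtain ⟨a, ha⟩ := Option.ne_none_iff_exists'.1 h1
  refine Eq.symm (cycleOn_apply_neg hf hm (φ := ρ l) (Equiv.injective _) (fun u v h => ?_)
    (by simp [hf0]) (by simpa [ha] using hl) i)
  rw [← hfix, perm_smul_adj, Equiv.Perm.inv_def, Equiv.symm_apply_apply,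
    Equiv.symm_apply_apply]
  exact h

theorem apply_neg_eq_some (hrefl : ∀ i, f (-i) = (f i).map (· * l)) {i : ZMod m} {a : Γ}
    (ha : f i = some a) : f (-i) = some (a * l) := by
  rw [hrefl, ha]
  rfl

variable (f) in
/-- The difference `αᵢ αᵢ₊₁⁻¹` of the cycle `(∞ = f 0, α₁ = f 1, …)`; a junk value when
`f i` or `f (i + 1)` is `∞`. -/
def diffAt (i : ZMod m) : Γ :=
  (f i).getD 1 * ((f (i + 1)).getD 1)⁻¹

theorem diffAt_eq {i : ZMod m} {a b : Γ} (ha : f i = some a) (hb : f (i + 1) = some b) :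
    diffAt f i = a * b⁻¹ := by
  simp [diffAt, ha, hb]

theorem injOn_diffAt [Fintype Γ] [NeZero m] (hf : Bijective f) (hm : 1 < m) (hf0 : f 0 = none)
    (hsurj : ∀ δ : Γ, δ ≠ 1 → ∃ i a b, f i = some a ∧ f (i + 1) = some b ∧ a * b⁻¹ = δ) :
    Set.InjOn (diffAt f) {i | f i ≠ none ∧ f (i + 1) ≠ none} := by
  classical
  have h1 : (1 : ZMod m) ≠ 0 := by
    exact_mod_cast ZMod.natCast_ne_zero_of_pos_of_lt one_pos hm
  set s : Finset (ZMod m) := {i | f i ≠ none ∧ f (i + 1) ≠ none}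
  have hs : s = (Finset.univ.erase 0).erase (-1) := by
    ext i
    simp [s, hf.1.ne_iff' hf0, add_eq_zero_iff_eq_neg, and_comm]
  have hcard : Fintype.card (ZMod m) = Fintype.card Γ + 1 := by
    rw [Fintype.card_congr (Equiv.ofBijective f hf), Fintype.card_option]
  have := Finset.injOn_of_surjOn_of_card_le (s := s) (t := Finset.univ.erase 1) (diffAt f)
    ?_ ?_ ?_
  · simpa [s] using this
  · intro i hi
    simp only [s, Finset.coe_filter, Finset.mem_univ, true_and, Set.mem_ofPred_eq,
      Option.ne_none_iff_exists'] at hi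
    obtain ⟨⟨a, ha⟩, ⟨b, hb⟩⟩ := hi
    rw [diffAt_eq ha hb]
    simp only [Finset.coe_erase, Finset.coe_univ, Set.mem_sdiff, Set.mem_univ,
      Set.mem_singleton_iff, true_and, mul_inv_eq_one]
    rintro rfl
    exact h1 (by simpa using hf.1 (ha.trans hb.symm))
  · intro δ hδ
    obtain ⟨i, a, b, ha, hb, rfl⟩ := hsurj δ (by simpa using hδ)
    exact ⟨i, by simp [s, ha, hb], diffAt_eq ha hb⟩
  · rw [hs, Finset.card_erase_of_mem (by simpa using h1), Finset.card_erase_of_mem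
      (Finset.mem_univ 0), Finset.card_erase_of_mem (Finset.mem_univ 1), Finset.card_univ,
      Finset.card_univ, hcard]
    omega

theorem exists_cycleOn_adj_none (hf : Bijective f) (hm : 1 < m) (hf0 : f 0 = none)
    (hrefl : ∀ i, f (-i) = (f i).map (· * l)) :
    ∃ u : Γ, (cycleOn m f).Adj none (some u) ∧
      ∀ w : Γ, (cycleOn m f).Adj none (some w) → w = u ∨ w = u * l := by
  have h1 : f 1 ≠ none :=
    hf0 ▸ hf.1.ne (by exact_mod_cast ZMod.natCast_ne_zero_of_pos_of_lt one_pos hm)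
  obtain ⟨u, hu⟩ := Option.ne_none_iff_exists'.1 h1
  refine ⟨u, ?_, fun w hw => ?_⟩
  · simpa [hf0, hu] using cycleOn_adj_add_one hf hm 0
  · rw [← hf0, cycleOn_adj_apply_iff hf hm, zero_add, zero_sub, apply_neg_eq_some hrefl hu, hu]
      at hw
    simpa using hw

theorem exists_cycleOn_dart_of_forall_exists_diff [Fintype Γ] (hf : Bijective f) (hm : 2 < m)
    (hf0 : f 0 = none) (hrefl : ∀ i, f (-i) = (f i).map (· * l))
    (hsurj : ∀ δ : Γ, δ ≠ 1 → ∃ i a b, f i = some a ∧ f (i + 1) = some b ∧ a * b⁻¹ = δ)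
    (δ : Γ) (hδ : δ ≠ 1) :
    ∃ u v : Γ, (cycleOn m f).Adj (some u) (some v) ∧ u * v⁻¹ = δ ∧
      ∀ u' v' : Γ, (cycleOn m f).Adj (some u') (some v') → u' * v'⁻¹ = δ →
        u' = u ∨ u' = u * l := by
  have : NeZero m := ⟨by omega⟩
  have hinj := injOn_diffAt hf (by omega) hf0 hsurj
  obtain ⟨i, u, v, hu, hv, rfl⟩ := hsurj δ hδ
  refine ⟨u, v, hu ▸ hv ▸ cycleOn_adj_add_one hf (by omega) i, rfl,
    fun u' v' hadj hδ' => ?_⟩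
  obtain ⟨j, hj⟩ := hf.2 (some u')
  rw [← hj, cycleOn_adj_apply_iff hf (by omega)] at hadj
  rcases hadj with hv' | hv'
  · -- the dart `(u', v')` is traversed forwards, at the same index as `(u, v)`
    have hji : j = i := hinj ⟨hj ▸ Option.some_ne_none _, hv' ▸ Option.some_ne_none _⟩
      ⟨hu ▸ Option.some_ne_none _, hv ▸ Option.some_ne_none _⟩
      (by rw [diffAt_eq hj hv'.symm, diffAt_eq hu hv, hδ'])
    subst hji
    exact Or.inl (Option.some.inj (hj.symm.trans hu))
  · -- the dart `(u', v')` is traversed backwards, at the index mirror to that of `(u, v)`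
    have hj' : f (j - 1 + 1) = some u' := by rwa [sub_add_cancel]
    have hu' : f (-(i + 1) + 1) = some (u * l) := by
      rw [show -(i + 1) + 1 = -i by ring]
      exact apply_neg_eq_some hrefl hu
    have hv'' := apply_neg_eq_some hrefl hv
    have hji : j - 1 = -(i + 1) :=
      hinj ⟨hv' ▸ Option.some_ne_none _, hj' ▸ Option.some_ne_none _⟩
        ⟨hv'' ▸ Option.some_ne_none _, hu' ▸ Option.some_ne_none _⟩ <| by
          rw [diffAt_eq hv'.symm hj', diffAt_eq hv'' hu']
          calc v' * u'⁻¹ = (u' * v'⁻¹)⁻¹ := by group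
            _ = v * l * (u * l)⁻¹ := by rw [hδ']; group
    rw [show j = -i by linear_combination hji] at hj
    exact Or.inr (Option.some.inj (hj.symm.trans (apply_neg_eq_some hrefl hu)))

theorem forall_exists_diff_of_cover {n : ℕ} {f : ZMod (2 * n + 1) → Option Γ} (hn : 0 < n)
    (hf : Injective f) (hf0 : f 0 = none) (hrefl : ∀ i, f (-i) = (f i).map (· * l))
    (hl : orderOf l = 2) (hconj : ∀ x, x * l * x⁻¹ = l)
    (hcover : ∀ δ : Γ, δ ≠ 1 → δ ≠ l → ∃ i a b, f i = some a ∧ f (i + 1) = some b ∧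
      (δ = a * b⁻¹ ∨ δ = b * a⁻¹))
    (δ : Γ) (hδ : δ ≠ 1) : ∃ i a b, f i = some a ∧ f (i + 1) = some b ∧ a * b⁻¹ = δ := by
  by_cases hδl : δ = l
  · -- the middle edge `{αₙ, αₙ₊₁} = {αₙ, αₙ l}` has difference `l`
    subst hδl
    have hfn : f n ≠ none :=
      hf0 ▸ hf.ne (ZMod.natCast_ne_zero_of_pos_of_lt hn (by omega))
    obtain ⟨a, ha⟩ := Option.ne_none_iff_exists'.1 hfn
    have hmid : (n : ZMod (2 * n + 1)) + 1 = -n := by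
      have := ZMod.natCast_self (2 * n + 1)
      push_cast at this
      linear_combination this
    have hinv : δ⁻¹ = δ :=
      inv_eq_of_mul_eq_one_right (by rw [← sq, ← hl, pow_orderOf_eq_one])
    refine ⟨n, a, a * δ, ha, hmid ▸ apply_neg_eq_some hrefl ha, ?_⟩
    rw [mul_inv_rev, hinv, ← mul_assoc, hconj]
  · obtain ⟨i, a, b, ha, hb, rfl | rfl⟩ := hcover δ hδ hδl
    · exact ⟨i, a, b, ha, hb, rfl⟩
    · refine ⟨-(i + 1), b * l, a * l, apply_neg_eq_some hrefl hb, ?_, by group⟩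
      rw [show -(i + 1) + 1 = -i by ring]
      exact apply_neg_eq_some hrefl ha

end Starter

/-- a starter cycle `A` on `{∞} ∪ Γ` fixed by the unique involution `l` and
whose consecutive differences over `i ∈ [n-1]` cover `Γ \ {1, l}` generates, by right
translations, a 1-rotational HCS of order `2n+1` over `Γ`. -/
theorem starter_gives_one_rotational_hcs {Γ : Type*} [Group Γ] [Fintype Γ]
    (n : ℕ) (hcard : Fintype.card Γ = 2 * n)
    (l : Γ) (hl : orderOf l = 2) (hbin : ∃! x : Γ, orderOf x = 2)
    (f : ZMod (2*n+1) → Option Γ) (hf : Function.Bijective f) (hf0 : f 0 = none)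
    (hfix : (Equiv.optionCongr (Equiv.mulRight l)) • cycleOn (2*n+1) f = cycleOn (2*n+1) f)
    (hdiff : {x : Γ | ∃ i : ℕ, 1 ≤ i ∧ i ≤ n - 1 ∧ ∃ a b : Γ,
        f ((i : ℕ) : ZMod (2*n+1)) = some a ∧ f (((i : ℕ) : ZMod (2*n+1)) + 1) = some b ∧
        (x = a * b⁻¹ ∨ x = b * a⁻¹)} = {x : Γ | x ≠ 1 ∧ x ≠ l}) :
    IsHCS (Set.range fun g : Γ =>
        (Equiv.optionCongr (Equiv.mulRight g)) • cycleOn (2*n+1) f) ∧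
      ∀ g : Γ, Equiv.optionCongr (Equiv.mulRight g) ∈
        autHCS (Set.range fun g : Γ =>
          (Equiv.optionCongr (Equiv.mulRight g)) • cycleOn (2*n+1) f) := by
  have hn : 0 < n := by
    have := Fintype.card_pos_iff.2 ⟨l⟩
    omega
  have hm : 2 < 2 * n + 1 := by omega
  have hrefl := apply_neg_eq_map_mul_of_smul_cycleOn_eq hf hm hf0 (fun h => by simp [h] at hl) hfix
  have hcover (δ : Γ) (h1 : δ ≠ 1) (hδl : δ ≠ l) :
      ∃ i a b, f i = some a ∧ f (i + 1) = some b ∧ (δ = a * b⁻¹ ∨ δ = b * a⁻¹) := by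
    obtain ⟨i, -, -, h⟩ := hdiff.symm.subset ⟨h1, hδl⟩
    exact ⟨_, h⟩
  have hsurj := forall_exists_diff_of_cover hn hf.1 hf0 hrefl hl
    (mul_mul_inv_eq_self_of_existsUnique_orderOf_eq_two hl hbin) hcover
  exact ⟨isHCS_range_translates (isHamCycle_cycleOn hf hm) hfix
      (exists_cycleOn_adj_none hf (by omega) hf0 hrefl)
      (exists_cycleOn_dart_of_forall_exists_diff hf hm hf0 hrefl hsurj),
    fun g => MulAction.mem_stabilizer_iff.2 (optionCongr_mulRight_smul_range g _)⟩
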